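/- Let Y and Y' be square-integrable real random variables on a common probability space and σ > 0. Then E[ d_TV( N(Y, σ²), N(Y', σ²) ) ] ≤ √( E[(Y − Y')²] / (2πσ²) ). In particular, if E[(Y − Y')²] ≤ 2a·s^γ for constants a ≥ 0, s ≥ 0, γ ≥ 0 (as holds for noisy Gaussian process observations at inputs x, x' with |x − x'| = s and kernel k satisfying k(0) − k(s) ≤ a·s^γ), then E[ d_TV( N(Y, σ²), N(Y', σ²) ) ] ≤ √(2a/(πσ²)) · s^{γ/2}. -/

import Mathlib

open MeasureTheory ProbabilityTheory

/-- Total variation distance between two measures: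
`sup_{A measurable} |μ(A) − ν(A)|`. -/
noncomputable def tvDist {𝒴 : Type*} [MeasurableSpace 𝒴] (μ ν : Measure 𝒴) : ℝ :=
  ⨆ A : {A : Set 𝒴 // MeasurableSet A}, |(μ A.1).toReal - (ν A.1).toReal|

/-! With equal variances the two Gaussian densities cross at the midpoint `c` of the means, so
`N(m, v)(A) - N(m', v)(A)` is largest for `A = [c, ∞)` (Scheffé). Translating by `m - m'`, that
difference is the `N(m', v)`-mass of an interval of length `m - m'`, at most
`(m - m') / √(2πv)` because the density never exceeds `1 / √(2πv)`. Averaging over `ω` and using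
`E|Y - Y'| ≤ √E[(Y - Y')²]` gives the bound. -/

open Real Set
open scoped NNReal ENNReal

lemma tvDist_nonneg {𝒴 : Type*} [MeasurableSpace 𝒴] (μ ν : Measure 𝒴) : 0 ≤ tvDist μ ν :=
  Real.iSup_nonneg fun _ ↦ abs_nonneg _

lemma integral_abs_le_sqrt_integral_sq {Ω : Type*} [MeasurableSpace Ω] {P : Measure Ω}
    [IsProbabilityMeasure P] {f : Ω → ℝ} (hf : MemLp f 2 P) :
    ∫ ω, |f ω| ∂P ≤ √(∫ ω, f ω ^ 2 ∂P) := by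
  have hvar := variance_nonneg |f| P
  rw [variance_eq_sub hf.abs] at hvar
  simp only [Pi.pow_apply, Pi.abs_apply, sq_abs] at hvar
  exact (le_abs_self _).trans (Real.abs_le_sqrt (by linarith))

lemma setIntegral_sub_le_of_le_on {α : Type*} [MeasurableSpace α] {μ : Measure α}
    {f g : α → ℝ} {S A : Set α} (hf : Integrable f μ) (hg : Integrable g μ)
    (hS : MeasurableSet S) (hA : MeasurableSet A)
    (hgf : ∀ x ∈ S, g x ≤ f x) (hfg : ∀ x ∉ S, f x ≤ g x) :
    ∫ x in A, f x ∂μ - ∫ x in A, g x ∂μ ≤ ∫ x in S, f x ∂μ - ∫ x in S, g x ∂μ := by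
  rw [← integral_sub hf.integrableOn hg.integrableOn,
    ← integral_sub hf.integrableOn hg.integrableOn,
    ← integral_inter_add_sdiff hS (f := fun x ↦ f x - g x) (hf.sub hg).integrableOn]
  have hdiff : ∫ x in A \ S, f x - g x ∂μ ≤ 0 :=
    setIntegral_nonpos (hA.diff hS) fun x hx ↦ sub_nonpos.mpr (hfg x hx.2)
  have hinter : ∫ x in A ∩ S, f x - g x ∂μ ≤ ∫ x in S, f x - g x ∂μ :=
    setIntegral_mono_set (hf.sub hg).integrableOn
      ((ae_restrict_mem hS).mono fun x hx ↦ sub_nonneg.mpr (hgf x hx))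
      (.of_forall fun _ hx ↦ hx.2)
  linarith

namespace ProbabilityTheory

lemma gaussianPDFReal_le_inv_sqrt (m : ℝ) (v : ℝ≥0) (x : ℝ) :
    gaussianPDFReal m v x ≤ (√(2 * π * v))⁻¹ := by
  rw [gaussianPDFReal]
  refine mul_le_of_le_one_right (by positivity) (exp_le_one_iff.mpr ?_)
  exact div_nonpos_of_nonpos_of_nonneg (neg_nonpos.mpr (sq_nonneg _)) (by positivity)

lemma gaussianPDFReal_le_of_abs_sub_le {m m' x : ℝ} (v : ℝ≥0) (h : |x - m| ≤ |x - m'|) :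
    gaussianPDFReal m' v x ≤ gaussianPDFReal m v x := by
  simp only [gaussianPDFReal]
  gcongr ?_ * rexp ?_
  exact div_le_div_of_nonneg_right (neg_le_neg (sq_le_sq.mpr h)) (by positivity)

lemma gaussianReal_apply_le {v : ℝ≥0} (hv : v ≠ 0) (m : ℝ) (s : Set ℝ) :
    gaussianReal m v s ≤ ENNReal.ofReal (√(2 * π * v))⁻¹ * volume s := by
  rw [gaussianReal_apply m hv, ← setLIntegral_const]
  exact lintegral_mono fun x ↦ ENNReal.ofReal_le_ofReal (gaussianPDFReal_le_inv_sqrt m v x)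

lemma gaussianReal_Ici_toReal_sub_le {v : ℝ≥0} (hv : v ≠ 0) {m' m : ℝ} (h : m' ≤ m) (c : ℝ) :
    (gaussianReal m v (Ici c)).toReal - (gaussianReal m' v (Ici c)).toReal
      ≤ (m - m') * (√(2 * π * v))⁻¹ := by
  have hshift : gaussianReal m v (Ici c) = gaussianReal m' v (Ici (c - (m - m'))) := by
    rw [← add_sub_cancel m' m, ← gaussianReal_map_add_const,
      Measure.map_apply (measurable_add_const _) measurableSet_Ici, preimage_add_const_Ici,
      add_sub_cancel]
  have hsplit : gaussianReal m' v (Ici (c - (m - m')))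
      = gaussianReal m' v (Ico (c - (m - m')) c) + gaussianReal m' v (Ici c) := by
    rw [← measure_union ((Iio_disjoint_Ici le_rfl).mono_left Ico_subset_Iio_self)
      measurableSet_Ici, Ico_union_Ici_eq_Ici (by linarith)]
  have hIco : gaussianReal m' v (Ico (c - (m - m')) c)
      ≤ ENNReal.ofReal ((m - m') * (√(2 * π * v))⁻¹) := by
    refine (gaussianReal_apply_le hv m' _).trans_eq ?_
    rw [Real.volume_Ico, sub_sub_cancel, ← ENNReal.ofReal_mul (by positivity), mul_comm]
  rw [hshift, hsplit, ENNReal.toReal_add (measure_ne_top _ _) (measure_ne_top _ _),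
    add_sub_cancel_right]
  exact ENNReal.toReal_le_of_le_ofReal (by positivity) hIco

lemma gaussianReal_toReal_sub_le {v : ℝ≥0} (hv : v ≠ 0) {m' m : ℝ} (h : m' ≤ m)
    {A : Set ℝ} (hA : MeasurableSet A) :
    (gaussianReal m v A).toReal - (gaussianReal m' v A).toReal
      ≤ (m - m') * (√(2 * π * v))⁻¹ := by
  refine le_trans ?_ (gaussianReal_Ici_toReal_sub_le hv h ((m + m') / 2))
  simp only [gaussianReal_apply_eq_integral _ hv,
    ENNReal.toReal_ofReal (setIntegral_nonneg_of_ae (.of_forall (gaussianPDFReal_nonneg _ v)))]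
  refine setIntegral_sub_le_of_le_on (integrable_gaussianPDFReal m v)
    (integrable_gaussianPDFReal m' v) measurableSet_Ici hA (fun x hx ↦ ?_) (fun x hx ↦ ?_)
  · have hxc : (m + m') / 2 ≤ x := hx
    exact gaussianPDFReal_le_of_abs_sub_le v (sq_le_sq.mp (by nlinarith))
  · have hxc : x < (m + m') / 2 := not_le.mp hx
    exact gaussianPDFReal_le_of_abs_sub_le v (sq_le_sq.mp (by nlinarith))

lemma abs_gaussianReal_toReal_sub_le {v : ℝ≥0} (hv : v ≠ 0) (m m' : ℝ)
    {A : Set ℝ} (hA : MeasurableSet A) :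
    |(gaussianReal m v A).toReal - (gaussianReal m' v A).toReal|
      ≤ |m - m'| * (√(2 * π * v))⁻¹ := by
  wlog h : m' ≤ m generalizing m m'
  · rw [abs_sub_comm, abs_sub_comm m]
    exact this m' m (le_of_not_ge h)
  have hcompl (n : ℝ) : (gaussianReal n v Aᶜ).toReal = 1 - (gaussianReal n v A).toReal := by
    rw [prob_compl_eq_one_sub hA, ENNReal.toReal_sub_of_le prob_le_one ENNReal.one_ne_top,
      ENNReal.toReal_one]
  have hA_le := gaussianReal_toReal_sub_le hv h hA
  have hAc_le := gaussianReal_toReal_sub_le hv h hA.compl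
  rw [hcompl, hcompl] at hAc_le
  rw [abs_of_nonneg (sub_nonneg.mpr h), abs_le]
  constructor <;> linarith

lemma tvDist_gaussianReal_le {v : ℝ≥0} (hv : v ≠ 0) (m m' : ℝ) :
    tvDist (gaussianReal m v) (gaussianReal m' v) ≤ |m - m'| * (√(2 * π * v))⁻¹ :=
  have : Nonempty {A : Set ℝ // MeasurableSet A} := ⟨⟨∅, .empty⟩⟩
  ciSup_le fun A ↦ abs_gaussianReal_toReal_sub_le hv m m' A.2

lemma integral_tvDist_gaussianReal_le {Ω : Type*} [MeasurableSpace Ω] {P : Measure Ω}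
    [IsProbabilityMeasure P] {Y Y' : Ω → ℝ} (hY : MemLp Y 2 P) (hY' : MemLp Y' 2 P)
    {v : ℝ≥0} (hv : v ≠ 0) :
    ∫ ω, tvDist (gaussianReal (Y ω) v) (gaussianReal (Y' ω) v) ∂P
      ≤ √((∫ ω, (Y ω - Y' ω) ^ 2 ∂P) / (2 * π * v)) := by
  have hdiff : MemLp (fun ω ↦ Y ω - Y' ω) 2 P := hY.sub hY'
  calc ∫ ω, tvDist (gaussianReal (Y ω) v) (gaussianReal (Y' ω) v) ∂P
      ≤ ∫ ω, |Y ω - Y' ω| * (√(2 * π * v))⁻¹ ∂P :=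
        integral_mono_of_nonneg (.of_forall fun _ ↦ tvDist_nonneg _ _)
          ((hdiff.integrable one_le_two).abs.mul_const _)
          (.of_forall fun ω ↦ tvDist_gaussianReal_le hv (Y ω) (Y' ω))
    _ = (∫ ω, |Y ω - Y' ω| ∂P) * (√(2 * π * v))⁻¹ := integral_mul_const _ _
    _ ≤ √(∫ ω, (Y ω - Y' ω) ^ 2 ∂P) * (√(2 * π * v))⁻¹ := by
        gcongr
        exact integral_abs_le_sqrt_integral_sq hdiff
    _ = √((∫ ω, (Y ω - Y' ω) ^ 2 ∂P) / (2 * π * v)) := by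
        rw [sqrt_div' _ (by positivity), div_eq_mul_inv]

end ProbabilityTheory

theorem stmt19_general
    {Ω : Type*} [MeasurableSpace Ω]
    (P : Measure Ω) [IsProbabilityMeasure P]
    (Y Y' : Ω → ℝ)
    (hY2 : MemLp Y 2 P) (hY'2 : MemLp Y' 2 P)
    (σ : ℝ) (hσ : 0 < σ) :
    (∫ ω, tvDist (gaussianReal (Y ω) (Real.toNNReal (σ ^ 2)))
                 (gaussianReal (Y' ω) (Real.toNNReal (σ ^ 2))) ∂P)
        ≤ Real.sqrt ((∫ ω, (Y ω - Y' ω) ^ 2 ∂P) / (2 * Real.pi * σ ^ 2))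
      ∧ ∀ a s γ : ℝ, 0 ≤ a → 0 ≤ s → 0 ≤ γ →
          (∫ ω, (Y ω - Y' ω) ^ 2 ∂P) ≤ 2 * a * s ^ γ →
          (∫ ω, tvDist (gaussianReal (Y ω) (Real.toNNReal (σ ^ 2)))
                       (gaussianReal (Y' ω) (Real.toNNReal (σ ^ 2))) ∂P)
            ≤ Real.sqrt (2 * a / (Real.pi * σ ^ 2)) * s ^ (γ / 2) := by
  have hv : (σ ^ 2).toNNReal ≠ 0 := by simpa using hσ.ne'
  have hbound := integral_tvDist_gaussianReal_le hY2 hY'2 hv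
  rw [Real.coe_toNNReal _ (sq_nonneg σ)] at hbound
  refine ⟨hbound, fun a s γ ha hs _ hE ↦ hbound.trans ?_⟩
  calc √((∫ ω, (Y ω - Y' ω) ^ 2 ∂P) / (2 * π * σ ^ 2))
      ≤ √(2 * a / (π * σ ^ 2) * s ^ γ) := by
        gcongr
        rw [div_le_iff₀ (by positivity)]
        have : 0 ≤ a * s ^ γ := mul_nonneg ha (rpow_nonneg hs γ)
        field_simp
        nlinarith
    _ = √(2 * a / (π * σ ^ 2)) * s ^ (γ / 2) := by
        rw [sqrt_mul (by positivity), sqrt_eq_rpow (s ^ γ), ← rpow_mul hs, mul_one_div]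

/-- for square-integrable real random variables `Y, Y'` and `σ > 0`,
`E[d_TV(N(Y,σ²), N(Y',σ²))] ≤ √(E[(Y−Y')²]/(2πσ²))`; in particular, if
`E[(Y−Y')²] ≤ 2a·s^γ` then `E[d_TV(N(Y,σ²), N(Y',σ²))] ≤ √(2a/(πσ²))·s^{γ/2}`. -/
theorem stmt19
    {Ω : Type*} [MeasurableSpace Ω]
    (P : Measure Ω) [IsProbabilityMeasure P]
    (Y Y' : Ω → ℝ) (hY : Measurable Y) (hY' : Measurable Y')
    (hY2 : MemLp Y 2 P) (hY'2 : MemLp Y' 2 P)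
    (σ : ℝ) (hσ : 0 < σ) :
    (∫ ω, tvDist (gaussianReal (Y ω) (Real.toNNReal (σ ^ 2)))
                 (gaussianReal (Y' ω) (Real.toNNReal (σ ^ 2))) ∂P)
        ≤ Real.sqrt ((∫ ω, (Y ω - Y' ω) ^ 2 ∂P) / (2 * Real.pi * σ ^ 2))
      ∧ ∀ a s γ : ℝ, 0 ≤ a → 0 ≤ s → 0 ≤ γ →
          (∫ ω, (Y ω - Y' ω) ^ 2 ∂P) ≤ 2 * a * s ^ γ →
          (∫ ω, tvDist (gaussianReal (Y ω) (Real.toNNReal (σ ^ 2)))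
                       (gaussianReal (Y' ω) (Real.toNNReal (σ ^ 2))) ∂P)
            ≤ Real.sqrt (2 * a / (Real.pi * σ ^ 2)) * s ^ (γ / 2) :=
  stmt19_general P Y Y' hY2 hY'2 σ hσ
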